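/- Let A ∈ ℝ^{m×n}, b ∈ ℝ^m, λ ∈ ℝ, and 1 ≤ k. Let L ∈ ℝ^{n×k} have linearly independent columns whose column space equals K_k(AᵀA, Aᵀb), and let D ∈ ℝ^{m×(k+1)} have linearly independent columns whose column space equals K_{k+1}(AAᵀ, b). Define the stacked residual hr(x) = (b − Ax, −λx) ∈ ℝ^{m+n} and the block-diagonal matrix D̄ = [[D, 0], [0, L]] ∈ ℝ^{(m+n)×(2k+1)}, which has linearly independent columns; let D̄† = (D̄ᵀD̄)⁻¹D̄ᵀ. Let x_QR be a minimizer of ‖hr(x)‖₂ over x in the column space of L, and let x_LU be a minimizer of ‖D̄† hr(x)‖₂ over x in the column space of L. Then ‖hr(x_QR)‖₂ ≤ ‖hr(x_LU)‖₂ ≤ κ(D̄) · ‖hr(x_QR)‖₂, where κ(D̄) = ‖D̄‖ · ‖D̄†‖ in the spectral (ℓ²) operator norm. -/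
import Mathlib


open Matrix

noncomputable def vnorm {α : Type*} [Fintype α] (x : α → ℝ) : ℝ :=
  ‖(WithLp.equiv 2 (α → ℝ)).symm x‖

noncomputable def specNorm {α β : Type*} [Fintype α] [Fintype β] [DecidableEq β]
    (M : Matrix α β ℝ) : ℝ :=
  ‖LinearMap.toContinuousLinearMap (Matrix.toEuclideanLin M)‖

noncomputable def pinv {α β : Type*} [Fintype α] [Fintype β] [DecidableEq α] [DecidableEq β]
    (M : Matrix α β ℝ) : Matrix β α ℝ :=
  (Mᵀ * M)⁻¹ * Mᵀ

def krylov {α : Type*} [Fintype α] [DecidableEq α] (M : Matrix α α ℝ) (v : α → ℝ) (k : ℕ) :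
    Submodule ℝ (α → ℝ) :=
  Submodule.span ℝ {w | ∃ i < k, w = (M ^ i).mulVec v}

/-- operator norm bound for `mulVec`. -/
lemma vnorm_mulVec_le {α β : Type*} [Fintype α] [Fintype β] [DecidableEq β]
    (M : Matrix α β ℝ) (x : β → ℝ) :
    vnorm (M.mulVec x) ≤ specNorm M * vnorm x := by
  have h := (LinearMap.toContinuousLinearMap (Matrix.toEuclideanLin M)).le_opNorm
    ((WithLp.equiv 2 (β → ℝ)).symm x)
  simpa [vnorm, specNorm, Matrix.toEuclideanLin_apply, Matrix.toLin'_apply] using h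

/-- Gram matrix of a matrix with injective `mulVec` is a unit. -/
lemma gram_isUnit {α β : Type*} [Fintype α] [Fintype β] [DecidableEq α] [DecidableEq β]
    (M : Matrix α β ℝ) (hM : Function.Injective M.mulVec) :
    IsUnit (Mᵀ * M) := by
  rw [← Matrix.mulVec_injective_iff_isUnit]
  intro x y hxy
  have hv : (Mᵀ * M).mulVec (x - y) = 0 := by
    rw [Matrix.mulVec_sub, hxy, sub_self]
  have h0 : (M.mulVec (x - y)) ⬝ᵥ (M.mulVec (x - y)) = 0 := by
    have : (x - y) ⬝ᵥ ((Mᵀ * M).mulVec (x - y)) = 0 := by rw [hv]; simp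
    rwa [← Matrix.mulVec_mulVec, Matrix.dotProduct_mulVec, Matrix.vecMul_transpose] at this
  have hMv : M.mulVec (x - y) = 0 := by
    rwa [dotProduct_self_eq_zero] at h0
  have : M.mulVec x = M.mulVec y := by
    rw [Matrix.mulVec_sub, sub_eq_zero] at hMv
    exact hMv
  exact hM this

lemma mul_pow_transpose {m n : ℕ} (A : Matrix (Fin m) (Fin n) ℝ) (i : ℕ) :
    A * (Aᵀ * A) ^ i * Aᵀ = (A * Aᵀ) ^ (i + 1) := by
  have key : ∀ j, A * (Aᵀ * A) ^ j = (A * Aᵀ) ^ j * A := by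
    intro j
    induction j with
    | zero => simp
    | succ j ih =>
      rw [pow_succ, ← Matrix.mul_assoc, ih, pow_succ]
      simp only [Matrix.mul_assoc]
  rw [key, pow_succ]
  simp only [Matrix.mul_assoc]

/-- Theorem 3.1: the Hybrid LSQR and Hybrid LSLU residual norms satisfy
`‖hr_k^QR‖ ≤ ‖hr_k^LU‖ ≤ κ(D̄) ‖hr_k^QR‖`. -/
theorem hybrid_lslu_residual_bounds
    (m n k : ℕ) (hk : 1 ≤ k) (lam : ℝ)
    (A : Matrix (Fin m) (Fin n) ℝ) (b : Fin m → ℝ)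
    (L : Matrix (Fin n) (Fin k) ℝ)
    (hL_indep : LinearIndependent ℝ (fun j : Fin k => fun i : Fin n => L i j))
    (hL_range : LinearMap.range L.mulVecLin = krylov (Aᵀ * A) (Aᵀ.mulVec b) k)
    (D : Matrix (Fin m) (Fin (k + 1)) ℝ)
    (hD_indep : LinearIndependent ℝ (fun j : Fin (k + 1) => fun i : Fin m => D i j))
    (hD_range : LinearMap.range D.mulVecLin = krylov (A * Aᵀ) b (k + 1))
    -- the stacked residual `hr(x) = (b − Ax, −λx) ∈ ℝ^{m+n}`
    (hr : (Fin n → ℝ) → (Fin m ⊕ Fin n → ℝ))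
    (hhr : hr = fun x => Sum.elim (b - A.mulVec x) (-(lam • x)))
    -- the block-diagonal matrix `D̄ = [[D, 0], [0, L]]`
    (Dbar : Matrix (Fin m ⊕ Fin n) (Fin (k + 1) ⊕ Fin k) ℝ)
    (hDbar : Dbar = Matrix.fromBlocks D 0 0 L)
    (xQR xLU : Fin n → ℝ)
    (hxQR_mem : xQR ∈ LinearMap.range L.mulVecLin)
    (hxQR_min : ∀ x ∈ LinearMap.range L.mulVecLin, vnorm (hr xQR) ≤ vnorm (hr x))
    (hxLU_mem : xLU ∈ LinearMap.range L.mulVecLin)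
    (hxLU_min : ∀ x ∈ LinearMap.range L.mulVecLin,
      vnorm ((pinv Dbar).mulVec (hr xLU)) ≤ vnorm ((pinv Dbar).mulVec (hr x))) :
    vnorm (hr xQR) ≤ vnorm (hr xLU) ∧
      vnorm (hr xLU) ≤ specNorm Dbar * specNorm (pinv Dbar) * vnorm (hr xQR) := by
  -- D̄ has injective mulVec, hence invertible Gram matrix
  have hD_inj : Function.Injective D.mulVec := by
    rw [Matrix.mulVec_injective_iff]
    exact hD_indep
  have hL_inj : Function.Injective L.mulVec := by
    rw [Matrix.mulVec_injective_iff]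
    exact hL_indep
  have hDbar_inj : Function.Injective Dbar.mulVec := by
    subst hDbar
    intro z w hzw
    have h1 : ∀ z : Fin (k+1) ⊕ Fin k → ℝ,
        (Matrix.fromBlocks D 0 0 L).mulVec z =
          Sum.elim (D.mulVec (z ∘ Sum.inl)) (L.mulVec (z ∘ Sum.inr)) := by
      intro z
      have : z = Sum.elim (z ∘ Sum.inl) (z ∘ Sum.inr) := by
        ext t; cases t <;> rfl
      rw [this, Matrix.fromBlocks_mulVec]
      simp
    rw [h1, h1] at hzw
    have e1 : D.mulVec (z ∘ Sum.inl) = D.mulVec (w ∘ Sum.inl) := by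
      have := congrFun hzw
      funext i; exact this (Sum.inl i)
    have e2 : L.mulVec (z ∘ Sum.inr) = L.mulVec (w ∘ Sum.inr) := by
      have := congrFun hzw
      funext i; exact this (Sum.inr i)
    have f1 := hD_inj e1
    have f2 := hL_inj e2
    funext t
    cases t with
    | inl i => exact congrFun f1 i
    | inr i => exact congrFun f2 i
  have hGram : IsUnit (Dbarᵀ * Dbar) := gram_isUnit Dbar hDbar_inj
  -- pinv D̄ * D̄ = 1
  have hpinv : pinv Dbar * Dbar = 1 := by
    rw [pinv, Matrix.mul_assoc, Matrix.nonsing_inv_mul _ ((Matrix.isUnit_iff_isUnit_det _).mp hGram)]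
  -- hr x is in the range of D̄ for x in the range of L
  have hmem : ∀ x ∈ LinearMap.range L.mulVecLin, ∃ z, Dbar.mulVec z = hr x := by
    intro x hx
    have hAx : A.mulVec x ∈ krylov (A * Aᵀ) b (k + 1) := by
      rw [hL_range] at hx
      have : A.mulVec x ∈ Submodule.map A.mulVecLin (krylov (Aᵀ * A) (Aᵀ.mulVec b) k) :=
        Submodule.mem_map_of_mem hx
      rw [krylov, Submodule.map_span] at this
      refine Submodule.span_le.mpr ?_ this
      rintro w ⟨w', ⟨i, hi, rfl⟩, rfl⟩
      apply Submodule.subset_span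
      refine ⟨i + 1, by omega, ?_⟩
      simp only [Matrix.mulVecLin_apply, Matrix.mulVec_mulVec]
      rw [← mul_pow_transpose]
      simp [Matrix.mulVec_mulVec, Matrix.mul_assoc]
    have hb : b ∈ krylov (A * Aᵀ) b (k + 1) := by
      apply Submodule.subset_span
      exact ⟨0, by omega, by simp⟩
    have hu : b - A.mulVec x ∈ LinearMap.range D.mulVecLin := by
      rw [hD_range]
      exact Submodule.sub_mem _ hb hAx
    have hv : -(lam • x) ∈ LinearMap.range L.mulVecLin :=
      Submodule.neg_mem _ (Submodule.smul_mem _ _ hx)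
    obtain ⟨p, hp⟩ := hu
    obtain ⟨q, hq⟩ := hv
    refine ⟨Sum.elim p q, ?_⟩
    subst hDbar
    rw [Matrix.fromBlocks_mulVec, hhr]
    simp only [Matrix.mulVecLin_apply] at hp hq
    simp [hp, hq]
  -- the key reconstruction identity
  have hrec : ∀ x ∈ LinearMap.range L.mulVecLin,
      Dbar.mulVec ((pinv Dbar).mulVec (hr x)) = hr x := by
    intro x hx
    obtain ⟨z, hz⟩ := hmem x hx
    rw [← hz, Matrix.mulVec_mulVec, Matrix.mulVec_mulVec, Matrix.mul_assoc, hpinv,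
      Matrix.mul_one]
  constructor
  · exact hxQR_min xLU hxLU_mem
  · calc vnorm (hr xLU) = vnorm (Dbar.mulVec ((pinv Dbar).mulVec (hr xLU))) := by
          rw [hrec xLU hxLU_mem]
      _ ≤ specNorm Dbar * vnorm ((pinv Dbar).mulVec (hr xLU)) := vnorm_mulVec_le _ _
      _ ≤ specNorm Dbar * vnorm ((pinv Dbar).mulVec (hr xQR)) := by
          apply mul_le_mul_of_nonneg_left (hxLU_min xQR hxQR_mem) (norm_nonneg _)
      _ ≤ specNorm Dbar * (specNorm (pinv Dbar) * vnorm (hr xQR)) := by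
          apply mul_le_mul_of_nonneg_left (vnorm_mulVec_le _ _) (norm_nonneg _)
      _ = specNorm Dbar * specNorm (pinv Dbar) * vnorm (hr xQR) := by ring
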